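/- arXiv:2207.01109 — 6 statements merged into one kernel-verified Lean document; each statement's English description precedes it below -/
import Mathlib

section
/- Let G be a finite connected simple graph in which every vertex has even degree and which has strictly more than 2|V(G)| − 2 edges. Then there exists a cycle C in G such that the graph obtained from G by deleting all edges of C is still connected and still has all vertex degrees even. -/
/-!
Take a spanning tree `T` of `G`. It has `|V| - 1` edges, so `G \ T` has at least `|V|` edges and
therefore contains a cycle `C`. Deleting the edges of `C` keeps `T`, hence connectivity, and since
every vertex meets `C` in zero or two edges, it keeps all degrees even.
-/

open Finset

namespace SimpleGraph

variable {V : Type*} {G H : SimpleGraph V}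

lemma IsCycles.even_ncard_neighborSet (hH : H.IsCycles) (v : V) :
    Even (H.neighborSet v).ncard := by
  rcases (H.neighborSet v).eq_empty_or_nonempty with h | h
  · simp [h]
  · simp [hH h]

lemma ncard_neighborSet_sdiff_add_ncard_neighborSet (hle : H ≤ G) (v : V)
    (hfin : (G.neighborSet v).Finite) :
    ((G \ H).neighborSet v).ncard + (H.neighborSet v).ncard = (G.neighborSet v).ncard := by
  have hunion : (G \ H).neighborSet v ∪ H.neighborSet v = G.neighborSet v := by
    ext w
    simp only [Set.mem_union, mem_neighborSet, sdiff_adj]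
    have := @hle v w
    tauto
  rw [← hunion]
  exact (Set.ncard_union_eq (Set.disjoint_left.mpr fun w hw hw' => hw.2 hw')
    (hfin.subset (hunion ▸ Set.subset_union_left))
    (hfin.subset (hunion ▸ Set.subset_union_right))).symm

lemma IsCycles.even_ncard_neighborSet_sdiff_iff (hH : H.IsCycles) (hle : H ≤ G) (v : V)
    (hfin : (G.neighborSet v).Finite) :
    Even ((G \ H).neighborSet v).ncard ↔ Even (G.neighborSet v).ncard := by
  rw [← ncard_neighborSet_sdiff_add_ncard_neighborSet hle v hfin, Nat.even_add,
    iff_true_right (hH.even_ncard_neighborSet v)]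

lemma Walk.deleteEdges_edgeSet_eq_sdiff {u v : V} (c : G.Walk u v) :
    G.deleteEdges c.edgeSet = G \ c.toSubgraph.spanningCoe := by
  rw [← edgeSet_inj, edgeSet_deleteEdges, edgeSet_sdiff, Subgraph.edgeSet_spanningCoe,
    Walk.edgeSet_toSubgraph]

lemma Walk.IsCycle.even_ncard_neighborSet_deleteEdges_iff {u : V} {c : G.Walk u u}
    (hc : c.IsCycle) (v : V) (hfin : (G.neighborSet v).Finite) :
    Even ((G.deleteEdges c.edgeSet).neighborSet v).ncard ↔ Even (G.neighborSet v).ncard := by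
  rw [c.deleteEdges_edgeSet_eq_sdiff]
  exact hc.isCycles_spanningCoe_toSubgraph.even_ncard_neighborSet_sdiff_iff
    c.toSubgraph.spanningCoe_le v hfin

lemma IsAcyclic.card_edgeFinset_lt [Fintype V] [Nonempty V] [Fintype H.edgeSet]
    (hH : H.IsAcyclic) : #H.edgeFinset < Fintype.card V := by
  obtain ⟨T, hHT, -, hT⟩ := connected_top.exists_isTree_le_of_le_of_isAcyclic le_top hH
  classical
  rw [← hT.card_edgeFinset]
  exact Nat.lt_succ_of_le (card_le_card (edgeFinset_mono hHT))

end SimpleGraph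

open SimpleGraph

theorem stmt1_general {V : Type*} [Fintype V] (G : SimpleGraph V)
    [DecidableRel G.Adj]
    (hconn : G.Connected)
    (heven : ∀ v : V, Even (G.degree v))
    (h : 2 * Fintype.card V - 2 < G.edgeFinset.card) :
    ∃ (v : V) (C : G.Walk v v), C.IsCycle ∧
      (G.deleteEdges {e | e ∈ C.edges}).Connected ∧
      ∀ u : V, Even (Nat.card ((G.deleteEdges {e | e ∈ C.edges}).neighborSet u)) := by
  have : Nonempty V := hconn.nonempty
  obtain ⟨T, hTG, hT⟩ := hconn.exists_isTree_le
  classical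
  have hcyclic : ¬ (G \ T).IsAcyclic := fun hacyc => by
    have hcard := hacyc.card_edgeFinset_lt
    rw [edgeFinset_sdiff, card_sdiff_of_subset (edgeFinset_mono hTG)] at hcard
    have := hT.card_edgeFinset
    omega
  obtain ⟨v, c, hc⟩ : ∃ v, ∃ c : (G \ T).Walk v v, c.IsCycle := by
    simpa [IsAcyclic] using hcyclic
  let C := c.mapLe sdiff_le
  refine ⟨v, C, hc.mapLe _, ?_, fun u => ?_⟩
  · refine hT.connected.mono fun a b hab => (deleteEdges_adj ..).mpr ⟨hTG hab, fun he => ?_⟩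
    change s(a, b) ∈ C.edges at he
    rw [c.edges_mapLe_eq_edges] at he
    exact (c.adj_of_mem_edges he).2 hab
  · rw [Nat.card_coe_set_eq, ← Walk.edgeSet,
      (hc.mapLe _).even_ncard_neighborSet_deleteEdges_iff u (Set.toFinite _),
      ← Nat.card_coe_set_eq, Nat.card_eq_fintype_card, card_neighborSet_eq_degree]
    exact heven u

/-- A finite connected simple graph in which every vertex has even degree and
which has more than `2|V| - 2` edges contains a cycle whose edge deletion leaves the graph
connected with all degrees still even. -/
theorem stmt1 {V : Type*} [Fintype V] [DecidableEq V] (G : SimpleGraph V)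
    [DecidableRel G.Adj]
    (hconn : G.Connected)
    (heven : ∀ v : V, Even (G.degree v))
    (h : 2 * Fintype.card V - 2 < G.edgeFinset.card) :
    ∃ (v : V) (C : G.Walk v v), C.IsCycle ∧
      (G.deleteEdges {e | e ∈ C.edges}).Connected ∧
      ∀ u : V, Even (Nat.card ((G.deleteEdges {e | e ∈ C.edges}).neighborSet u)) :=
  stmt1_general G hconn heven h
end

section
/- Let G = (V, E) be a finite simple graph, W ⊆ V, w : E → ℕ edge weights, and B ∈ ℕ a budget. Set Q = (Σ_{e ∈ E} w(e)) + 2|V| + 1, define new weights ŵ by ŵ(e) = Q·w(e) if w(e) > 0 and ŵ(e) = 1 if w(e) = 0, and set B̂ = Q·B + 2|V|. Then G has a closed walk visiting every vertex of W of weight at most B under w if and only if G has a closed walk visiting every vertex of W of weight at most B̂ under ŵ. (In particular, the new weights are all strictly positive.) -/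
/-!
Since `Q > 2|V|`, a walk's weight under the new weights is `Q · w(S) + z(S)`, with `z(S)` the
number of traversals of zero-weight edges, so it is at most `Q·B + 2|V|` exactly when
`w(S) ≤ B` and `z(S)` is small. Any walk can be made to satisfy `z(S) ≤ 2|V|` without increasing
its weight or losing vertices: reroute each zero-weight edge through a spanning forest of the
zero-weight subgraph, then cut out, between two traversals of the same dart, the enclosed
subwalk and walk it backwards instead. Afterwards the zero-weight traversals are distinct darts
of a forest, and a forest has fewer than `2|V|` darts.
-/

open SimpleGraph Finset

theorem List.sum_map_ite_pos_mul_else_one {α : Type*} (w : α → ℕ) (Q : ℕ) (l : List α) :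
    (l.map fun e => if 0 < w e then Q * w e else 1).sum =
      Q * (l.map w).sum + l.countP (w · = 0) := by
  induction l with
  | nil => simp
  | cons e l ih =>
    by_cases he : w e = 0
    · simp [he, ih]; omega
    · simp [Nat.pos_of_ne_zero he, he, ih, Nat.mul_add]; omega

theorem List.Subperm.sum_map_le {α M : Type*} [AddCommMonoid M] [PartialOrder M]
    [IsOrderedAddMonoid M] [CanonicallyOrderedAdd M] {l₁ l₂ : List α} (f : α → M)
    (h : l₁.Subperm l₂) : (l₁.map f).sum ≤ (l₂.map f).sum := by
  obtain ⟨l, hl, hsub⟩ := h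
  exact (hl.map f).sum_eq ▸ (hsub.map f).sum_le_sum fun _ _ => zero_le

theorem SimpleGraph.IsAcyclic.card_edgeFinset_le {V : Type*} [Fintype V] {T : SimpleGraph V}
    [Fintype T.edgeSet] (hT : T.IsAcyclic) : #T.edgeFinset ≤ Fintype.card V - 1 := by
  classical
  cases isEmpty_or_nonempty V
  · simpa using T.card_edgeFinset_le_card_choose_two
  · obtain ⟨F, hTF, -, hF⟩ := connected_top.exists_isTree_le_of_le_of_isAcyclic le_top hT
    rw [← hF.card_edgeFinset]
    exact card_le_card (edgeFinset_subset_edgeFinset.mpr hTF)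

namespace SimpleGraph.Walk

variable {V : Type*} {G : SimpleGraph V}

theorem exists_eq_append_cons_of_mem_darts {u v : V} {p : G.Walk u v} {d : G.Dart}
    (hd : d ∈ p.darts) :
    ∃ (q : G.Walk u d.fst) (r : G.Walk d.snd v), p = q.append (cons d.adj r) := by
  induction p with
  | nil => simp at hd
  | cons h p ih =>
    rcases List.mem_cons.mp hd with rfl | hd
    · exact ⟨nil, p, rfl⟩
    · obtain ⟨q, r, rfl⟩ := ih hd
      exact ⟨cons h q, r, rfl⟩

theorem exists_eq_append_cons_append_cons_of_duplicate {u v : V} {p : G.Walk u v} {d : G.Dart}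
    (hd : List.Duplicate d p.darts) :
    ∃ (q : G.Walk u d.fst) (s : G.Walk d.snd d.fst) (t : G.Walk d.snd v),
      p = q.append (cons d.adj (s.append (cons d.adj t))) := by
  induction p with
  | nil => simp at hd
  | cons h p ih =>
    rcases List.duplicate_cons_iff.mp hd with ⟨rfl, hd⟩ | hd
    · obtain ⟨s, t, rfl⟩ := exists_eq_append_cons_of_mem_darts hd
      exact ⟨nil, s, t, rfl⟩
    · obtain ⟨q, s, t, rfl⟩ := ih hd
      exact ⟨cons h q, s, t, rfl⟩

theorem exists_support_subset_edges_subperm_darts_nodup {u v : V} (p : G.Walk u v) :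
    ∃ q : G.Walk u v, p.support ⊆ q.support ∧ q.edges.Subperm p.edges ∧ q.darts.Nodup := by
  induction hn : p.length using Nat.strong_induction_on generalizing p with
  | _ n ih =>
  by_cases hnd : p.darts.Nodup
  · exact ⟨p, List.Subset.refl _, List.Subperm.refl _, hnd⟩
  obtain ⟨d, hd⟩ := List.exists_duplicate_iff_not_nodup.mpr hnd
  obtain ⟨q, s, t, rfl⟩ := exists_eq_append_cons_append_cons_of_duplicate hd
  obtain ⟨r, hsupp, hedges, hr⟩ :=
    ih _ (by simp [← hn]) (q.append (s.reverse.append t)) rfl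
  refine ⟨r, fun x hx => hsupp ?_, hedges.trans ?_, hr⟩
  · simp only [mem_support_append_iff, support_cons, List.mem_cons, support_reverse,
      List.mem_reverse] at hx ⊢
    rcases hx with hx | rfl | hx | rfl | hx <;> simp [*]
  · simp only [edges_append, edges_cons, edges_reverse]
    refine (List.subperm_append_left _).mpr
      (((List.reverse_perm _).append_right _).subperm.trans ?_)
    exact ((List.sublist_cons_self _ _).append_left _).trans (List.sublist_cons_self _ _)
      |>.subperm

theorem exists_reroute (w : Sym2 V → ℕ) {T : SimpleGraph V} (hTG : T ≤ G)
    (hT : ∀ e ∈ T.edgeSet, w e = 0)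
    (hreach : ∀ ⦃a b⦄, G.Adj a b → w s(a, b) = 0 → T.Reachable a b)
    {u v : V} (p : G.Walk u v) :
    ∃ q : G.Walk u v, p.support ⊆ q.support ∧ (q.edges.map w).sum = (p.edges.map w).sum ∧
      ∀ e ∈ q.edges, w e = 0 → e ∈ T.edgeSet := by
  induction p with
  | nil => exact ⟨nil, List.Subset.refl _, rfl, by simp⟩
  | @cons a b c h p ih =>
    obtain ⟨q, hsupp, hsum, hzero⟩ := ih
    by_cases hab : w s(a, b) = 0
    · obtain ⟨r⟩ := hreach h hab
      have hr : ∀ e ∈ r.edges, e ∈ T.edgeSet := fun e he => r.edges_subset_edgeSet he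
      refine ⟨(r.mapLe hTG).append q, ?_, ?_, ?_⟩
      · simp only [support_cons, List.cons_subset, start_mem_support, true_and]
        exact fun x hx => (mem_support_append_iff _ _).mpr (.inr (hsupp hx))
      · have hr0 : (r.edges.map w).sum = 0 :=
          List.sum_eq_zero (by simpa using fun e he => hT e (hr e he))
        simp [hr0, hsum, hab]
      · simp only [edges_append, edges_mapLe_eq_edges, List.mem_append]
        rintro e (he | he) he0
        exacts [hr e he, hzero e he he0]
    · refine ⟨cons h q, List.cons_subset_cons _ hsupp, by simp [hsum], ?_⟩
      simp only [edges_cons, List.mem_cons, forall_eq_or_imp]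
      exact ⟨fun h0 => absurd h0 hab, hzero⟩

theorem countP_edges_le_card_dart [Fintype V] {T : SimpleGraph V} [Fintype T.Dart]
    (P : Sym2 V → Prop) [DecidablePred P] {u v : V} {p : G.Walk u v} (hp : p.darts.Nodup)
    (hT : ∀ e ∈ p.edges, P e → e ∈ T.edgeSet) :
    p.edges.countP (P ·) ≤ Fintype.card T.Dart := by
  have hadj : ∀ d ∈ p.darts.filter (P ·.edge), T.Adj d.fst d.snd := fun d hd => by
    rw [List.mem_filter, decide_eq_true_iff] at hd
    exact hT d.edge (List.mem_map_of_mem hd.1) hd.2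
  calc p.edges.countP (P ·) = (p.darts.filter (P ·.edge)).length := by
        rw [edges, List.countP_map, List.countP_eq_length_filter]; rfl
    _ = ((p.darts.filter (P ·.edge)).pmap (fun d hd => (⟨d.toProd, hd⟩ : T.Dart)) hadj).length
          := (List.length_pmap ..).symm
    _ ≤ Fintype.card T.Dart := List.Nodup.length_le_card <|
        (hp.filter _).pmap fun _ _ _ _ h => Dart.ext _ _ (congrArg (·.toProd) h)

theorem exists_countP_weight_eq_zero_le [Fintype V] (w : Sym2 V → ℕ) {u v : V}
    (p : G.Walk u v) :
    ∃ q : G.Walk u v, p.support ⊆ q.support ∧ (q.edges.map w).sum ≤ (p.edges.map w).sum ∧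
      q.edges.countP (w · = 0) ≤ 2 * Fintype.card V := by
  classical
  obtain ⟨T, hTZ, hTacyclic, hreach⟩ :=
    (G.deleteEdges {e | w e ≠ 0}).exists_isAcyclic_reachable_eq_le
  have hTzero : ∀ e ∈ T.edgeSet, w e = 0 := fun e he =>
    not_not.mp (edgeSet_deleteEdges _ ▸ edgeSet_mono hTZ he).2
  obtain ⟨r, hpr, hsum, hzero⟩ := p.exists_reroute w (hTZ.trans (G.deleteEdges_le _)) hTzero
    fun a b hab h0 => hreach ▸ Adj.reachable (by simp [hab, h0])
  obtain ⟨q, hrq, hqr, hq⟩ := r.exists_support_subset_edges_subperm_darts_nodup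
  refine ⟨q, List.Subset.trans hpr hrq, hsum ▸ hqr.sum_map_le w, ?_⟩
  calc q.edges.countP (w · = 0)
      ≤ Fintype.card T.Dart := countP_edges_le_card_dart _ hq fun e he => hzero e (hqr.subset he)
    _ = 2 * #T.edgeFinset := T.dart_card_eq_twice_card_edges
    _ ≤ 2 * Fintype.card V := by have := hTacyclic.card_edgeFinset_le; omega

end SimpleGraph.Walk

theorem stmt3_general {V : Type*} [Fintype V] (G : SimpleGraph V)
    [DecidableRel G.Adj]
    (w : Sym2 V → ℕ) (W : Set V) (B : ℕ) :
    (∃ (v : V) (S : G.Walk v v), (∀ x ∈ W, x ∈ S.support) ∧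
      (S.edges.map w).sum ≤ B) ↔
    (∃ (v : V) (S : G.Walk v v), (∀ x ∈ W, x ∈ S.support) ∧
      (S.edges.map (fun e =>
          if 0 < w e then ((∑ e' ∈ G.edgeFinset, w e') + 2 * Fintype.card V + 1) * w e
          else 1)).sum ≤
        ((∑ e' ∈ G.edgeFinset, w e') + 2 * Fintype.card V + 1) * B + 2 * Fintype.card V) := by
  set Q := (∑ e' ∈ G.edgeFinset, w e') + 2 * Fintype.card V + 1
  simp only [List.sum_map_ite_pos_mul_else_one]
  constructor
  · rintro ⟨v, S, hW, hB⟩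
    obtain ⟨S', hSS', hsum, hzero⟩ := S.exists_countP_weight_eq_zero_le w
    exact ⟨v, S', fun x hx => hSS' (hW x hx),
      add_le_add (Nat.mul_le_mul_left Q (hsum.trans hB)) hzero⟩
  · rintro ⟨v, S, hW, hB⟩
    refine ⟨v, S, hW, ?_⟩
    by_contra! hlt
    have : Q * (B + 1) ≤ Q * (S.edges.map w).sum := Nat.mul_le_mul_left Q hlt
    rw [mul_add_one] at this
    omega

/-- Rescaling the edge weights by `Q = (Σ_e w(e)) + 2|V| + 1` and replacing
zero weights by `1` (with the new budget `Q·B + 2|V|`) yields an equivalent instance: `G` has a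
closed walk visiting every vertex of `W` of weight at most `B` under `w` iff it has one of
weight at most `Q·B + 2|V|` under the new weights. -/
theorem stmt3 {V : Type*} [Fintype V] [DecidableEq V] (G : SimpleGraph V)
    [DecidableRel G.Adj]
    (w : Sym2 V → ℕ) (W : Set V) (B : ℕ) :
    (∃ (v : V) (S : G.Walk v v), (∀ x ∈ W, x ∈ S.support) ∧
      (S.edges.map w).sum ≤ B) ↔
    (∃ (v : V) (S : G.Walk v v), (∀ x ∈ W, x ∈ S.support) ∧
      (S.edges.map (fun e =>
          if 0 < w e then ((∑ e' ∈ G.edgeFinset, w e') + 2 * Fintype.card V + 1) * w e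
          else 1)).sum ≤
        ((∑ e' ∈ G.edgeFinset, w e') + 2 * Fintype.card V + 1) * B + 2 * Fintype.card V) :=
  stmt3_general G w W B
end

section
/- Let G be a finite simple graph with edge weights w : E(G) → ℕ, let W ⊆ V(G), and let v be a vertex with v ∉ W and deg(v) = 1. Then for every B ∈ ℕ, G has a closed walk visiting every vertex of W of weight at most B if and only if the graph G − v (obtained by deleting v and its incident edge) has a closed walk visiting every vertex of W of weight at most B. -/
/-!
The only neighbour `u₀` of the pendant vertex `v` lies on every edge at `v`, so in a walk each
visit to `v` is a detour `u₀ → v → u₀` that can be cut out; a walk starting or ending at `v`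
is started or ended at `u₀` instead. This keeps every other visited vertex, and the edges of the
new walk form a sublist of the old ones, so the weight does not increase.
-/

namespace SimpleGraph.Walk

variable {V : Type*} {G : SimpleGraph V}

theorem edges_induce_map_val {s : Set V} {a b : V} (p : G.Walk a b)
    (hp : ∀ x ∈ p.support, x ∈ s) :
    (p.induce s hp).edges.map (Sym2.map (↑)) = p.edges := by
  induction p with
  | nil => rfl
  | cons h p ih => simp [ih]

theorem exists_walk_avoiding_pendant [DecidableEq V] {v u₀ : V}
    (hv : ∀ x, G.Adj v x ↔ x = u₀) {a b : V} (p : G.Walk a b) :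
    ∃ q : G.Walk (if a = v then u₀ else a) (if b = v then u₀ else b),
      v ∉ q.support ∧ q.edges.Sublist p.edges ∧ ∀ x ∈ p.support, x ≠ v → x ∈ q.support := by
  have hu₀ : u₀ ≠ v := fun h => G.loopless.irrefl v (h ▸ (hv u₀).2 rfl)
  induction p with
  | @nil a =>
    refine ⟨nil, ?_, by simp, by simp_all⟩
    by_cases ha : a = v <;> simp [ha, hu₀.symm, Ne.symm]
  | @cons a c b hac p ih =>
    obtain ⟨q, hqv, hqe, hqs⟩ := ih
    by_cases ha : a = v
    · subst ha
      obtain rfl : c = u₀ := (hv c).1 hac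
      refine ⟨q.copy (by simp) rfl, by simpa using hqv, by simpa using hqe.cons _, ?_⟩
      simp only [support_cons, List.mem_cons, support_copy]
      rintro x (rfl | hx) hxv
      · exact absurd rfl hxv
      · exact hqs x hx hxv
    by_cases hc : c = v
    · subst hc
      obtain rfl : a = u₀ := (hv a).1 hac.symm
      refine ⟨q.copy (by simp) rfl, by simpa using hqv, by simpa using hqe.cons _, ?_⟩
      simp only [support_cons, List.mem_cons, support_copy]
      rintro x (rfl | hx) hxv
      · simpa using q.start_mem_support
      · exact hqs x hx hxv
    · refine ⟨(q.copy (if_neg hc) rfl).cons (by simpa [ha] using hac) |>.copy (by simp [ha]) rfl,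
        by simp [Ne.symm ha, hqv], by simpa [hc] using hqe.cons_cons s(a, c), ?_⟩
      simp only [support_cons, List.mem_cons, support_copy]
      rintro x (rfl | hx) hxv
      · exact Or.inl rfl
      · exact Or.inr (hqs x hx hxv)

end SimpleGraph.Walk

/-- Deleting a non-terminal vertex `v ∉ W` of degree 1 is safe: for every
budget `B`, `G` has a closed walk visiting every vertex of `W` of weight at most `B` iff
`G - v` (the induced subgraph on `V ∖ {v}`) has one. -/
theorem stmt6 {V : Type*} [Fintype V] [DecidableEq V] (G : SimpleGraph V)
    [DecidableRel G.Adj]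
    (w : Sym2 V → ℕ) (W : Set V) (v : V) (hvW : v ∉ W) (hdeg : G.degree v = 1) (B : ℕ) :
    (∃ (u : V) (S : G.Walk u u), (∀ x ∈ W, x ∈ S.support) ∧
      (S.edges.map w).sum ≤ B) ↔
    (∃ (u : ↥{x : V | x ≠ v}) (S : (G.induce {x : V | x ≠ v}).Walk u u),
      (∀ a : ↥{x : V | x ≠ v}, (a : V) ∈ W → a ∈ S.support) ∧
      (S.edges.map (fun e => w (e.map (fun x : ↥{x : V | x ≠ v} => (x : V))))).sum ≤ B) := by
  obtain ⟨u₀, hvu₀, hu₀⟩ := G.degree_eq_one_iff_existsUnique_adj.1 hdeg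
  have hv : ∀ x, G.Adj v x ↔ x = u₀ := fun x => ⟨hu₀ x, fun h => h ▸ hvu₀⟩
  constructor
  · rintro ⟨u, S, hSW, hSB⟩
    obtain ⟨q, hqv, hqe, hqs⟩ := S.exists_walk_avoiding_pendant hv
    have hq : ∀ x ∈ q.support, x ∈ {x : V | x ≠ v} := fun x hx h => hqv (h ▸ hx)
    refine ⟨_, q.induce _ hq, fun a ha => by simpa using hqs a (hSW a ha) a.2, ?_⟩
    calc _ = (q.edges.map w).sum := by rw [← q.edges_induce_map_val hq, List.map_map]; rfl
      _ ≤ (S.edges.map w).sum := (hqe.map w).sum_le_sum fun _ _ => Nat.zero_le _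
      _ ≤ B := hSB
  · rintro ⟨u, S, hSW, hSB⟩
    refine ⟨_, S.map (SimpleGraph.Embedding.induce _).toHom, fun x hx => ?_, ?_⟩
    · rw [SimpleGraph.Walk.support_map]
      exact List.mem_map.2 ⟨_, hSW ⟨x, fun h => hvW (h ▸ hx)⟩ hx, rfl⟩
    · rwa [SimpleGraph.Walk.edges_map, List.map_map]
end

section
/- Let G be a finite connected simple graph with strictly positive edge weights w : E(G) → ℕ (i.e., w(e) ≥ 1 for all e), let W ⊆ V(G) with |W| ≥ 2, and let v ∈ W be a vertex of degree 1 with unique neighbor u. Then: (i) every minimum-weight closed walk visiting every vertex of W visits v exactly once and traverses the edge {u, v} exactly twice; and (ii) the minimum weight of a closed walk in G visiting every vertex of W equals 2·w({u, v}) plus the minimum weight of a closed walk in G − v visiting every vertex of (W ∖ {v}) ∪ {u}. -/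
/-!
Rotated to start at the pendant vertex `v`, a closed walk through `v` and some other vertex has
the shape `v u ⋯ u v`, with a closed walk `r` at `u` in the middle, and costs `2 w(uv)` more
than `r`. If `r` returned to `v`, it would visit `W` on its own at smaller cost, since weights
are positive; so in a minimum walk `r` lies in `G - v` and visits `(W ∖ {v}) ∪ {u}`. Conversely,
a closed walk of `G - v` through `u` becomes a walk visiting `W` by inserting the detour `u v u`.
-/

open SimpleGraph

namespace SimpleGraph

variable {V : Type*} {G : SimpleGraph V}

lemma adj_of_neighborSet_eq_singleton {u v : V} (hN : G.neighborSet v = {u}) : G.Adj v u := by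
  rw [← mem_neighborSet, hN]
  rfl

lemma Connected.exists_walk_forall_mem_support (hG : G.Connected) (a : V) {s : Set V}
    (hs : s.Finite) : ∃ p : G.Walk a a, ∀ x ∈ s, x ∈ p.support := by
  induction s, hs using Set.Finite.induction_on with
  | empty => exact ⟨.nil, by simp⟩
  | @insert x s _ _ ih =>
    obtain ⟨p, hp⟩ := ih
    obtain ⟨q⟩ := hG.preconnected a x
    refine ⟨(q.append q.reverse).append p, ?_⟩
    rintro z (rfl | hz)
    · simp
    · simp [hp z hz]

namespace Walk

variable {a b u v : V}

def weight (w : Sym2 V → ℕ) (p : G.Walk a b) : ℕ := (p.edges.map w).sum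

variable (w : Sym2 V → ℕ)

@[simp] lemma weight_cons {c : V} (h : G.Adj a b) (p : G.Walk b c) :
    (cons h p).weight w = w s(a, b) + p.weight w := by
  simp [weight]

@[simp] lemma weight_concat {c : V} (p : G.Walk a b) (h : G.Adj b c) :
    (p.concat h).weight w = p.weight w + w s(b, c) := by
  simp [weight]

lemma weight_rotate [DecidableEq V] (c : G.Walk a a) (h : u ∈ c.support) :
    (c.rotate u h).weight w = c.weight w :=
  ((c.rotate_edges u h).perm.map w).sum_eq

lemma weight_map {V' : Type*} {G' : SimpleGraph V'} (f : G →g G') (w : Sym2 V' → ℕ)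
    (p : G.Walk a b) : (p.map f).weight w = p.weight (fun e => w (e.map f)) := by
  simp [weight, edges_map, List.map_map, Function.comp_def]

lemma exists_eq_cons_concat_of_neighborSet_eq_singleton (hN : G.neighborSet v = {u})
    (c : G.Walk v v) (hc : ¬ c.Nil) :
    ∃ r : G.Walk u u, c = cons (adj_of_neighborSet_eq_singleton hN)
      (r.concat (adj_of_neighborSet_eq_singleton hN).symm) := by
  have mem_nbr {x : V} (h : G.Adj v x) : x = u := by
    rw [← Set.mem_singleton_iff, ← hN]; exact h
  cases c with
  | nil => exact absurd .nil hc
  | cons h p =>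
    obtain rfl := mem_nbr h
    cases p with
    | nil => exact (h.ne rfl).elim
    | cons h₁ p =>
      obtain ⟨x, q, h', hq⟩ := exists_cons_eq_concat h₁ p
      obtain rfl := mem_nbr h'.symm
      exact ⟨q, by rw [hq]⟩

section Rotate

variable [DecidableEq V] {w} {h : G.Adj v u} {c : G.Walk a a} {hv : v ∈ c.support}
  {r : G.Walk u u}

lemma mem_support_iff_of_rotate_eq (hr : c.rotate v hv = cons h (r.concat h.symm)) {x : V} :
    x ∈ c.support ↔ x = v ∨ x ∈ r.support := by
  rw [← mem_support_rotate_iff c v hv, hr]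
  simp [or_comm]

lemma weight_eq_of_rotate_eq (hr : c.rotate v hv = cons h (r.concat h.symm)) :
    c.weight w = 2 * w s(u, v) + r.weight w := by
  rw [← weight_rotate w c hv, hr, weight_cons, weight_concat, Sym2.eq_swap]
  ring

lemma count_eq_of_rotate_eq (hr : c.rotate v hv = cons h (r.concat h.symm))
    (hvr : v ∉ r.support) : c.support.tail.count v = 1 ∧ c.edges.count s(u, v) = 2 := by
  have huv : s(u, v) ∉ r.edges := fun he => hvr (r.snd_mem_support_of_mem_edges he)
  rw [← (c.support_rotate v hv).perm.count_eq, ← (c.rotate_edges v hv).perm.count_eq, hr]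
  simp [List.count_eq_zero.2 hvr, List.count_eq_zero.2 huv, Sym2.eq_swap]

lemma exists_rotate_eq_cons_concat_of_minimal {W : Set V} (hN : G.neighborSet v = {u})
    (hwuv : 1 ≤ w s(u, v)) {y : V} (hyW : y ∈ W) (hyv : y ≠ v) (hvW : v ∈ W)
    (hc : ∀ x ∈ W, x ∈ c.support)
    (hmin : ∀ (b : V) (c' : G.Walk b b), (∀ x ∈ W, x ∈ c'.support) → c.weight w ≤ c'.weight w) :
    ∃ r : G.Walk u u, v ∉ r.support ∧ c.rotate v (hc v hvW) =
      cons (adj_of_neighborSet_eq_singleton hN)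
        (r.concat (adj_of_neighborSet_eq_singleton hN).symm) := by
  have hnil : ¬ (c.rotate v (hc v hvW)).Nil := fun hnil => hyv <| by
    simpa [nil_iff_support_eq.1 hnil] using
      (mem_support_rotate_iff c v (hc v hvW)).2 (hc y hyW)
  obtain ⟨r, hr⟩ := exists_eq_cons_concat_of_neighborSet_eq_singleton hN _ hnil
  refine ⟨r, fun hvr => ?_, hr⟩
  have hrW : ∀ x ∈ W, x ∈ r.support := fun x hx =>
    ((mem_support_iff_of_rotate_eq hr).1 (hc x hx)).elim (· ▸ hvr) id
  have := hmin u r hrW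
  rw [weight_eq_of_rotate_eq hr] at this
  omega

end Rotate

end Walk

def closedWalkWeights (G : SimpleGraph V) (w : Sym2 V → ℕ) (W : Set V) : Set ℕ :=
  {n | ∃ (a : V) (c : G.Walk a a), (∀ x ∈ W, x ∈ c.support) ∧ c.weight w = n}

variable {w : Sym2 V → ℕ} {W : Set V} {u v : V}

variable (w) in
lemma closedWalkWeights_nonempty (hG : G.Connected) (hW : W.Finite) :
    (G.closedWalkWeights w W).Nonempty := by
  obtain ⟨c, hc⟩ := hG.exists_walk_forall_mem_support hG.nonempty.some hW
  exact ⟨_, _, c, hc, rfl⟩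

lemma sInf_closedWalkWeights_le {a : V} {c : G.Walk a a} (hc : ∀ x ∈ W, x ∈ c.support) :
    sInf (G.closedWalkWeights w W) ≤ c.weight w :=
  Nat.sInf_le ⟨a, c, hc, rfl⟩

variable (w) in
lemma weight_mem_closedWalkWeights_induce {r : G.Walk u u} (hvr : v ∉ r.support)
    (hr : ∀ x ∈ W \ {v}, x ∈ r.support) :
    r.weight w ∈ (G.induce {x | x ≠ v}).closedWalkWeights (fun e => w (e.map Subtype.val))
      (Subtype.val ⁻¹' (W \ {v} ∪ {u})) := by
  have hr' : ∀ x ∈ r.support, x ∈ {x | x ≠ v} := fun x hx hxv => hvr (hxv ▸ hx)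
  refine ⟨_, r.induce _ hr', fun x hx => ?_, ?_⟩
  · rcases hx with hx | hx
    · simpa using hr x hx
    · simp_all
  · conv_rhs => rw [← r.map_induce hr']
    exact (Walk.weight_map (Embedding.induce _).toHom w _).symm

lemma add_weight_mem_closedWalkWeights [DecidableEq V] (h : G.Adj v u) {b : {x // x ≠ v}}
    (T : (G.induce {x | x ≠ v}).Walk b b)
    (hT : ∀ x ∈ Subtype.val ⁻¹' (W \ {v} ∪ {u}), x ∈ T.support) :
    2 * w s(u, v) + T.weight (fun e => w (e.map Subtype.val)) ∈ G.closedWalkWeights w W := by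
  set T' := T.map (Embedding.induce {x | x ≠ v}).toHom
  have hT' : ∀ x ∈ W \ {v} ∪ {u}, x ∈ T'.support := fun x hx => by
    have hxv : x ≠ v := by rintro rfl; simp_all
    rw [Walk.support_map]
    exact List.mem_map.2 ⟨⟨x, hxv⟩, hT _ hx, rfl⟩
  have hu : u ∈ T'.support := hT' u (by simp)
  refine ⟨v, .cons h ((T'.rotate u hu).concat h.symm), fun x hx => ?_, ?_⟩
  · by_cases hxv : x = v
    · simp [hxv]
    · simp only [Walk.support_cons, Walk.support_concat, List.mem_cons, List.mem_append,
        Walk.mem_support_rotate_iff]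
      exact .inr (.inl (hT' x (.inl ⟨hx, hxv⟩)))
  · have hT'w : T'.weight w = T.weight (fun e => w (e.map Subtype.val)) := Walk.weight_map _ w T
    rw [Walk.weight_cons, Walk.weight_concat, Walk.weight_rotate, hT'w, Sym2.eq_swap]
    ring

end SimpleGraph

theorem stmt7_general {V : Type*} [DecidableEq V] (G : SimpleGraph V)
    (hG : G.Connected) (w : Sym2 V → ℕ) (hw : ∀ e ∈ G.edgeSet, 1 ≤ w e)
    (W : Set V) (hW : 2 ≤ W.ncard) (u v : V) (hvW : v ∈ W)
    (hN : G.neighborSet v = {u}) :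
    (∀ (a : V) (S : G.Walk a a), (∀ x ∈ W, x ∈ S.support) →
      (∀ (b : V) (S' : G.Walk b b), (∀ x ∈ W, x ∈ S'.support) →
        (S.edges.map w).sum ≤ (S'.edges.map w).sum) →
      S.support.tail.count v = 1 ∧ S.edges.count s(u, v) = 2) ∧
    sInf {n : ℕ | ∃ (a : V) (S : G.Walk a a), (∀ x ∈ W, x ∈ S.support) ∧
        (S.edges.map w).sum = n} =
      2 * w s(u, v) +
      sInf {n : ℕ | ∃ (a : ↥{x : V | x ≠ v})
          (S : (G.induce {x : V | x ≠ v}).Walk a a),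
        (∀ b : ↥{x : V | x ≠ v}, (b : V) ∈ (W \ {v}) ∪ {u} → b ∈ S.support) ∧
        (S.edges.map (fun e => w (e.map (fun x : ↥{x : V | x ≠ v} => (x : V))))).sum = n} := by
  have huv := adj_of_neighborSet_eq_singleton hN
  have hwuv : 1 ≤ w s(u, v) := hw _ huv.symm
  obtain ⟨y, hyW, hyv⟩ := Set.exists_ne_of_one_lt_ncard hW v
  refine ⟨fun a S hS hmin => ?_, ?_⟩
  · obtain ⟨r, hvr, hr⟩ :=
      Walk.exists_rotate_eq_cons_concat_of_minimal hN hwuv hyW hyv hvW hS hmin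
    exact Walk.count_eq_of_rotate_eq hr hvr
  change sInf (G.closedWalkWeights w W) = 2 * w s(u, v) +
    sInf ((G.induce {x | x ≠ v}).closedWalkWeights (fun e => w (e.map Subtype.val))
      (Subtype.val ⁻¹' (W \ {v} ∪ {u})))
  have hWfin : W.Finite := Set.finite_of_ncard_pos (by omega)
  obtain ⟨a, S, hS, hSw⟩ := Nat.sInf_mem (closedWalkWeights_nonempty w hG hWfin)
  obtain ⟨r, hvr, hr⟩ := Walk.exists_rotate_eq_cons_concat_of_minimal hN hwuv hyW hyv hvW hS
    fun _ _ hS' => hSw ▸ sInf_closedWalkWeights_le hS'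
  have hrR := weight_mem_closedWalkWeights_induce w hvr fun x hx =>
    ((Walk.mem_support_iff_of_rotate_eq hr).1 (hS x hx.1)).resolve_left hx.2
  obtain ⟨b, T, hT, hTw⟩ := Nat.sInf_mem ⟨_, hrR⟩
  refine le_antisymm ?_ ?_
  · exact hTw ▸ Nat.sInf_le (add_weight_mem_closedWalkWeights huv T hT)
  · rw [← hSw, Walk.weight_eq_of_rotate_eq hr]
    exact Nat.add_le_add_left (Nat.sInf_le hrR) _

/-- Let `G` be connected with strictly positive edge weights, `|W| ≥ 2`, and
let `v ∈ W` have degree 1 with unique neighbor `u`. Then (i) every minimum-weight closed walk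
visiting `W` visits `v` exactly once (identifying the two endpoint occurrences) and traverses
`{u, v}` exactly twice; (ii) the minimum weight of a closed walk in `G` visiting `W` equals
`2·w({u,v})` plus the minimum weight of a closed walk in `G - v` visiting `(W ∖ {v}) ∪ {u}`. -/
theorem stmt7 {V : Type*} [Fintype V] [DecidableEq V] (G : SimpleGraph V)
    [DecidableRel G.Adj]
    (hG : G.Connected) (w : Sym2 V → ℕ) (hw : ∀ e ∈ G.edgeSet, 1 ≤ w e)
    (W : Set V) (hW : 2 ≤ W.ncard) (u v : V) (hvW : v ∈ W)
    (hN : G.neighborSet v = {u}) :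
    (∀ (a : V) (S : G.Walk a a), (∀ x ∈ W, x ∈ S.support) →
      (∀ (b : V) (S' : G.Walk b b), (∀ x ∈ W, x ∈ S'.support) →
        (S.edges.map w).sum ≤ (S'.edges.map w).sum) →
      S.support.tail.count v = 1 ∧ S.edges.count s(u, v) = 2) ∧
    sInf {n : ℕ | ∃ (a : V) (S : G.Walk a a), (∀ x ∈ W, x ∈ S.support) ∧
        (S.edges.map w).sum = n} =
      2 * w s(u, v) +
      sInf {n : ℕ | ∃ (a : ↥{x : V | x ≠ v})
          (S : (G.induce {x : V | x ≠ v}).Walk a a),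
        (∀ b : ↥{x : V | x ≠ v}, (b : V) ∈ (W \ {v}) ∪ {u} → b ∈ S.support) ∧
        (S.edges.map (fun e => w (e.map (fun x : ↥{x : V | x ≠ v} => (x : V))))).sum = n} :=
  stmt7_general G hG w hw W hW u v hvW hN
end

section
/- Let k ≥ 1 and t ≥ 1, and let G₁, …, G_t be finite simple graphs on pairwise disjoint vertex sets, each with exactly k vertices. Let G be the graph obtained from the disjoint union of G₁, …, G_t by adding one new vertex v adjacent to every other vertex of G. Then G has a closed walk visiting every vertex of G with at most t·(k + 1) edge traversals if and only if every Gᵢ (1 ≤ i ≤ t) contains a Hamiltonian path. -/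
/-- The disjoint union of the graphs `Gs 0, …, Gs (t-1)` (each on vertex set `Fin k`) together
with a new apex vertex (`none`) adjacent to every other vertex. -/
def apexGraph (t k : ℕ) (Gs : Fin t → SimpleGraph (Fin k)) :
    SimpleGraph (Option (Fin t × Fin k)) where
  Adj x y :=
    match x, y with
    | some p, some q => p.1 = q.1 ∧ (Gs p.1).Adj p.2 q.2
    | some _, none => True
    | none, some _ => True
    | none, none => False
  symm := by
    constructor
    rintro (_ | ⟨i, a⟩) (_ | ⟨j, b⟩) h
    · exact h.elim
    · trivial
    · trivial
    · obtain ⟨h1, h2⟩ := h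
      dsimp only at h1 h2 ⊢
      subst h1
      exact ⟨rfl, h2.symm⟩
  loopless := by
    constructor
    rintro (_ | ⟨i, a⟩) h
    · exact h.elim
    · exact (Gs i).loopless.irrefl a h.2


/-!
Cutting a closed walk at its visits to the apex splits it into excursions, each consisting of a
walk inside a single `Gᵢ` and the two edges joining its ends to the apex. The excursions into `Gᵢ`
together cover its `k` vertices, so they cost at least `k + 1` traversals, with equality only for
one excursion through a walk of length `k - 1` that covers `Gᵢ`, i.e. a Hamiltonian path.
Conversely, joining the apex to the ends of Hamiltonian paths of all the `Gᵢ` gives a closed walk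
of length `t (k + 1)`.
-/

open SimpleGraph

namespace SimpleGraph.Walk

variable {V : Type*} {G : SimpleGraph V}

lemma isHamiltonian_of_length_lt [Fintype V] [DecidableEq V] {a b : V} {p : G.Walk a b}
    (hp : ∀ v, v ∈ p.support) (hlen : p.length < Fintype.card V) : p.IsHamiltonian := by
  have hcard : p.support.toFinset.card = p.support.length := by
    refine le_antisymm (List.toFinset_card_le _) ?_
    rw [length_support, Finset.eq_univ_of_forall fun v => List.mem_toFinset.2 (hp v),
      Finset.card_univ]
    omega
  exact (IsPath.mk' (Multiset.toFinset_card_eq_card_iff_nodup.1 hcard)).isHamiltonian_of_mem hp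

lemma exists_length_eq_sum_of_loops {ι : Type*} [Fintype ι] {v : V} (c : ι → G.Walk v v) :
    ∃ w : G.Walk v v, w.length = ∑ i, (c i).length ∧ ∀ i, (c i).support ⊆ w.support := by
  classical
  suffices ∀ s : Finset ι, ∃ w : G.Walk v v,
      w.length = ∑ i ∈ s, (c i).length ∧ ∀ i ∈ s, (c i).support ⊆ w.support by
    simpa using this Finset.univ
  intro s
  induction s using Finset.induction_on with
  | empty => exact ⟨nil, rfl, by simp⟩
  | insert a s ha ih =>
    obtain ⟨w, hlen, hsupp⟩ := ih
    refine ⟨(c a).append w, by simp [Finset.sum_insert ha, hlen], ?_⟩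
    rintro i hi x hx
    rw [mem_support_append_iff]
    rcases Finset.mem_insert.1 hi with rfl | hi
    · exact .inl hx
    · exact .inr (hsupp i hi hx)

end SimpleGraph.Walk

section Excursions

variable {V : Type*} {H : SimpleGraph V}

/-- A walk `x ⇝ y` of `H` stands for the closed walk `apex → x ⇝ y → apex`, two edges longer. -/
def excursionCost (M : List (Σ x y : V, H.Walk x y)) : ℕ :=
  (M.map fun e => e.2.2.length + 2).sum

@[simp] lemma excursionCost_nil : excursionCost ([] : List (Σ x y : V, H.Walk x y)) = 0 := rfl

@[simp] lemma excursionCost_cons (e : Σ x y : V, H.Walk x y) (M : List (Σ x y : V, H.Walk x y)) :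
    excursionCost (e :: M) = e.2.2.length + 2 + excursionCost M := rfl

lemma excursionCost_eq_length_flatMap_support (M : List (Σ x y : V, H.Walk x y)) :
    excursionCost M = (M.flatMap fun e => e.2.2.support).length + M.length := by
  induction M with
  | nil => rfl
  | cons e M ih =>
    simp only [excursionCost_cons, ih, List.flatMap_cons, List.length_append,
      Walk.length_support, List.length_cons]
    omega

variable [Fintype V] [DecidableEq V] (M : List (Σ x y : V, H.Walk x y))

lemma card_add_length_le_excursionCost (hM : ∀ v, ∃ e ∈ M, v ∈ e.2.2.support) :
    Fintype.card V + M.length ≤ excursionCost M := by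
  have hcover : (Finset.univ : Finset V) ⊆ (M.flatMap fun e => e.2.2.support).toFinset :=
    fun v _ => List.mem_toFinset.2 (List.mem_flatMap.2 (hM v))
  rw [excursionCost_eq_length_flatMap_support]
  have := (Finset.card_le_card hcover).trans (List.toFinset_card_le _)
  simp only [Finset.card_univ] at this
  omega

lemma card_add_one_le_excursionCost [Nonempty V] (hM : ∀ v, ∃ e ∈ M, v ∈ e.2.2.support) :
    Fintype.card V + 1 ≤ excursionCost M := by
  have hne : M ≠ [] := by
    rintro rfl
    simpa using hM (Classical.arbitrary V)
  have := card_add_length_le_excursionCost M hM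
  have := List.length_pos_iff.2 hne
  omega

lemma exists_isHamiltonian_of_excursionCost_le [Nonempty V]
    (hM : ∀ v, ∃ e ∈ M, v ∈ e.2.2.support)
    (hcost : excursionCost M ≤ Fintype.card V + 1) :
    ∃ (a b : V) (p : H.Walk a b), p.IsHamiltonian := by
  have hlen : M.length ≤ 1 := by
    have := card_add_length_le_excursionCost M hM
    omega
  obtain ⟨e, rfl⟩ : ∃ e, M = [e] := by
    rcases M with _ | ⟨e, _ | _⟩
    · simpa using hM (Classical.arbitrary V)
    · exact ⟨e, rfl⟩
    · simp at hlen
  refine ⟨e.1, e.2.1, e.2.2, Walk.isHamiltonian_of_length_lt (fun v => ?_) ?_⟩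
  · simpa using hM v
  · simp only [excursionCost_cons, excursionCost_nil] at hcost
    omega

end Excursions

section Apex

variable {t k : ℕ}

def apexHom (Gs : Fin t → SimpleGraph (Fin k)) (i : Fin t) : Gs i →g apexGraph t k Gs :=
  ⟨fun z => some (i, z), fun h => ⟨rfl, h⟩⟩

variable {Gs : Fin t → SimpleGraph (Fin k)}

@[simp] lemma apexHom_apply (i : Fin t) (z : Fin k) : apexHom Gs i z = some (i, z) := rfl

lemma apexGraph_adj_none_apexHom (i : Fin t) (z : Fin k) :
    (apexGraph t k Gs).Adj none (apexHom Gs i z) :=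
  trivial

lemma apexGraph_adj_apexHom_none (i : Fin t) (z : Fin k) :
    (apexGraph t k Gs).Adj (apexHom Gs i z) none :=
  trivial

lemma apexGraph_adj_some_some {p q : Fin t × Fin k} :
    (apexGraph t k Gs).Adj (some p) (some q) ↔ p.1 = q.1 ∧ (Gs p.1).Adj p.2 q.2 :=
  Iff.rfl

lemma exists_loop_of_walk (i : Fin t) {a b : Fin k} (p : (Gs i).Walk a b) :
    ∃ c : (apexGraph t k Gs).Walk none none,
      c.length = p.length + 2 ∧ ∀ z ∈ p.support, some (i, z) ∈ c.support :=
  ⟨((p.map (apexHom Gs i)).concat (apexGraph_adj_apexHom_none i b)).cons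
      (apexGraph_adj_none_apexHom i a),
    by simp only [Walk.length_cons, Walk.length_concat, Walk.length_map],
    fun z hz => by
      simp only [Walk.support_cons, Walk.support_concat, Walk.support_map]
      simp [hz]⟩

lemma exists_excursion_append {i : Fin t} {x : Fin k}
    (W : (apexGraph t k Gs).Walk (some (i, x)) none) :
    ∃ (y : Fin k) (w : (Gs i).Walk x y) (R : (apexGraph t k Gs).Walk none none),
      W.length = w.length + R.length + 1 ∧
      ∀ j z, some (j, z) ∈ W.support → (j = i ∧ z ∈ w.support) ∨ some (j, z) ∈ R.support :=
  match W with
  | .cons (v := none) _ R => ⟨x, .nil, R, by simp, by simp⟩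
  | .cons (v := some (j, z)) h W => by
    obtain ⟨y, w, R, hlen, hsupp⟩ := exists_excursion_append W
    obtain ⟨rfl, hadj⟩ := apexGraph_adj_some_some.1 h
    refine ⟨y, w.cons hadj, R, by simp [hlen]; omega, fun j' z' h' => ?_⟩
    rw [Walk.support_cons, List.mem_cons] at h'
    rcases h' with h' | h'
    · cases h'
      exact .inl ⟨rfl, (w.cons hadj).start_mem_support⟩
    · exact (hsupp j' z' h').imp_left fun ⟨hj, hz⟩ => ⟨hj, List.mem_cons_of_mem _ hz⟩

lemma exists_excursions (W : (apexGraph t k Gs).Walk none none) :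
    ∃ L : (i : Fin t) → List (Σ x y : Fin k, (Gs i).Walk x y),
      ∑ i, excursionCost (L i) ≤ W.length ∧
      ∀ i z, some (i, z) ∈ W.support → ∃ e ∈ L i, z ∈ e.2.2.support :=
  match W with
  | .nil => ⟨fun _ => [], by simp, by simp⟩
  | .cons (v := none) h _ => h.elim
  | .cons (v := some (i, x)) _ W₁ => by
    obtain ⟨y, w, R, hlen, hsupp⟩ := exists_excursion_append W₁
    obtain ⟨L, hcost, hcov⟩ := exists_excursions R
    refine ⟨Function.update L i (⟨x, y, w⟩ :: L i), ?_, fun j z hz => ?_⟩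
    · have hsum : ∑ j, excursionCost (Function.update L i (⟨x, y, w⟩ :: L i) j)
          = w.length + 2 + ∑ j, excursionCost (L j) := by
        simp_rw [Function.apply_update (fun _ => excursionCost), excursionCost_cons]
        rw [Finset.sum_update_of_mem (Finset.mem_univ i), Finset.sdiff_singleton_eq_erase,
          add_assoc, Finset.add_sum_erase _ (fun j => excursionCost (L j)) (Finset.mem_univ i)]
      rw [hsum, Walk.length_cons, hlen]
      omega
    · rw [Walk.support_cons, List.mem_cons] at hz
      rcases hz with hz | hz
      · cases hz
      rcases hsupp j z hz with ⟨rfl, hz⟩ | hz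
      · exact ⟨⟨x, y, w⟩, by simp, hz⟩
      · obtain ⟨e, he, hze⟩ := hcov j z hz
        refine ⟨e, ?_, hze⟩
        rcases eq_or_ne j i with rfl | hji
        · simpa using .inr he
        · rwa [Function.update_of_ne hji]
termination_by W.length
decreasing_by simp_all; omega

lemma exists_isHamiltonian_of_covering_walk (hk : 1 ≤ k) {a : Option (Fin t × Fin k)}
    (S : (apexGraph t k Gs).Walk a a) (hS : ∀ x, x ∈ S.support) (hlen : S.length ≤ t * (k + 1))
    (i : Fin t) : ∃ (a b : Fin k) (p : (Gs i).Walk a b), p.IsHamiltonian := by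
  have : Nonempty (Fin k) := ⟨⟨0, hk⟩⟩
  obtain ⟨L, hcost, hcov⟩ := exists_excursions (S.rotate none (hS none))
  have hcover : ∀ i z, ∃ e ∈ L i, z ∈ e.2.2.support := fun i z =>
    hcov i z ((S.mem_support_rotate_iff _ _).2 (hS _))
  have hlow : ∀ i ∈ Finset.univ, k + 1 ≤ excursionCost (L i) := fun i _ => by
    simpa using card_add_one_le_excursionCost (L i) (hcover i)
  have htight : ∑ _i : Fin t, (k + 1) = ∑ i, excursionCost (L i) := by
    refine le_antisymm (Finset.sum_le_sum hlow) ?_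
    simpa [mul_comm] using hcost.trans ((Walk.length_rotate _ _ _).trans_le hlen)
  refine exists_isHamiltonian_of_excursionCost_le (L i) (hcover i) ?_
  simp [(Finset.sum_eq_sum_iff_of_le hlow).1 htight i (Finset.mem_univ i)]

lemma exists_covering_walk_of_isHamiltonian (hk : 1 ≤ k)
    (hham : ∀ i, ∃ (a b : Fin k) (p : (Gs i).Walk a b), p.IsHamiltonian) :
    ∃ S : (apexGraph t k Gs).Walk none none, (∀ x, x ∈ S.support) ∧ S.length = t * (k + 1) := by
  choose a b p hp using hham
  choose c hclen hcsupp using fun i => exists_loop_of_walk i (p i)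
  obtain ⟨S, hSlen, hSsupp⟩ := Walk.exists_length_eq_sum_of_loops c
  refine ⟨S, ?_, ?_⟩
  · rintro (_ | ⟨i, z⟩)
    · exact S.start_mem_support
    · exact hSsupp i (hcsupp i z ((hp i).mem_support z))
  · have hc : ∀ i, (c i).length = k + 1 := fun i => by
      rw [hclen, (hp i).length_eq, Fintype.card_fin]
      omega
    simp [hSlen, hc]

end Apex

theorem stmt11_general (t k : ℕ) (hk : 1 ≤ k)
    (Gs : Fin t → SimpleGraph (Fin k)) :
    (∃ (a : Option (Fin t × Fin k)) (S : (apexGraph t k Gs).Walk a a),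
      (∀ x : Option (Fin t × Fin k), x ∈ S.support) ∧ S.length ≤ t * (k + 1)) ↔
    ∀ i : Fin t, ∃ (a b : Fin k) (p : (Gs i).Walk a b), p.IsHamiltonian := by
  constructor
  · rintro ⟨a, S, hS, hlen⟩
    exact exists_isHamiltonian_of_covering_walk hk S hS hlen
  · intro hham
    obtain ⟨S, hS, hlen⟩ := exists_covering_walk_of_isHamiltonian hk hham
    exact ⟨none, S, hS, hlen.le⟩

/-- The apex construction over `t` graphs each on `k` vertices has a closed
walk visiting every vertex with at most `t·(k+1)` edge traversals iff every `Gs i` has a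
Hamiltonian path. -/
theorem stmt11 (t k : ℕ) (ht : 1 ≤ t) (hk : 1 ≤ k)
    (Gs : Fin t → SimpleGraph (Fin k)) :
    (∃ (a : Option (Fin t × Fin k)) (S : (apexGraph t k Gs).Walk a a),
      (∀ x : Option (Fin t × Fin k), x ∈ S.support) ∧ S.length ≤ t * (k + 1)) ↔
    ∀ i : Fin t, ∃ (a b : Fin k) (p : (Gs i).Walk a b), p.IsHamiltonian :=
  stmt11_general t k hk Gs
end

section
/- Let ℓ ≥ 3 and let S_ℓ be the selection gadget of length ℓ: its vertex set is {xᵢ⁰, xᵢ¹, xᵢ* : i ∈ ℤ/ℓ} and its edge set consists of, for every i ∈ ℤ/ℓ, the edges {xᵢ⁰, xᵢ*}, {xᵢ¹, xᵢ*}, {xᵢ*, x_{i+1}⁰}, and {xᵢ*, x_{i+1}¹} (indices modulo ℓ). Let W = {xᵢ* : i ∈ ℤ/ℓ}. Then: (i) every closed walk in S_ℓ visiting every vertex of W has at least 2ℓ edge traversals; (ii) there exists a closed walk visiting every vertex of W with exactly 2ℓ edge traversals; and (iii) every closed walk visiting every vertex of W with exactly 2ℓ edge traversals visits, for each i ∈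 ℤ/ℓ, exactly one of the two vertices xᵢ⁰ and xᵢ¹. -/
/-!
Sending the two ports of cherry `i` to `2i` and its terminal to `2i + 1` maps the selection
gadget homomorphically onto the cycle `ZMod (2ℓ)`, so a closed walk projects to a closed walk of
`±1` steps, which lifts to a walk `h` on `ℤ`. If `h` returns to its start, the `ℓ` terminals lift
to `ℓ` distinct integers of equal parity, which span at least `2ℓ - 2`, and a closed walk covering
that span has length at least `4ℓ - 4`. Otherwise `h` winds around the cycle, which takes at least
`2ℓ` steps. For length exactly `2ℓ` and `ℓ ≥ 3` only the winding case is left, the lift is then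
`k ↦ ±k`, and the walk meets every fibre of the projection exactly once; the fibre over `2i`
consists of the two ports of cherry `i`.
-/

/-- The selection gadget of length `ℓ`: vertices are pairs `(i, j)` with `i : ZMod ℓ` and
`j : Fin 3`, where `(i, 0) = xᵢ⁰`, `(i, 1) = xᵢ¹` and `(i, 2) = xᵢ*`. The terminal `xᵢ*` is
adjacent exactly to the ports `xᵢ⁰, xᵢ¹, x_{i+1}⁰, x_{i+1}¹` (indices mod `ℓ`). -/
def selGadget (ℓ : ℕ) : SimpleGraph (ZMod ℓ × Fin 3) where
  Adj x y :=
    (x.2 = 2 ∧ y.2 ≠ 2 ∧ (y.1 = x.1 ∨ y.1 = x.1 + 1)) ∨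
    (y.2 = 2 ∧ x.2 ≠ 2 ∧ (x.1 = y.1 ∨ x.1 = y.1 + 1))
  symm := by
    constructor
    intro x y h
    exact h.symm
  loopless := by
    constructor
    rintro x (⟨h1, h2, -⟩ | ⟨h1, h2, -⟩) <;> exact h2 h1

open Finset SimpleGraph

section UnitSteps

variable {h : ℕ → ℤ}

lemma abs_sub_le_of_abs_sub_succ_le (hh : ∀ k, |h (k + 1) - h k| ≤ 1) {j k : ℕ} (hjk : j ≤ k) :
    |h k - h j| ≤ k - j := by
  induction k, hjk using Nat.le_induction with
  | base => simp
  | succ k _ ih =>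
    calc |h (k + 1) - h j| ≤ |h (k + 1) - h k| + |h k - h j| := abs_sub_le _ _ _
      _ ≤ 1 + (k - j) := add_le_add (hh k) ih
      _ = ((k + 1 : ℕ) : ℤ) - j := by push_cast; ring

lemma two_mul_sub_le_of_eq (hh : ∀ k, |h (k + 1) - h k| ≤ 1) {n : ℕ} (hn : h n = h 0)
    {j k : ℕ} (hj : j ≤ n) (hk : k ≤ n) : 2 * (h k - h j) ≤ n := by
  have hj₀ := abs_sub_le_of_abs_sub_succ_le hh (Nat.zero_le j)
  have hk₀ := abs_sub_le_of_abs_sub_succ_le hh (Nat.zero_le k)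
  have hjn := abs_sub_le_of_abs_sub_succ_le hh hj
  have hkn := abs_sub_le_of_abs_sub_succ_le hh hk
  rw [abs_le] at hj₀ hk₀ hjn hkn
  rcases le_total j k with hjk | hkj
  · have := abs_sub_le_of_abs_sub_succ_le hh hjk
    rw [abs_le] at this
    omega
  · have := abs_sub_le_of_abs_sub_succ_le hh hkj
    rw [abs_le] at this
    omega

end UnitSteps

lemma two_mul_card_le_of_even_sub {ι : Type*} [Fintype ι] [Nonempty ι] {v : ι → ℤ}
    (hv : Function.Injective v) {a b : ℤ} (hab : ∀ t, v t ∈ Icc a b)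
    (hpar : ∀ t, Even (v t - a)) : 2 * (Fintype.card ι : ℤ) ≤ b - a + 2 := by
  have hinj : Set.InjOn (fun t => (v t - a) / 2) (univ : Finset ι) := by
    intro s _ t _ hst
    obtain ⟨r, hr⟩ := hpar s
    obtain ⟨r', hr'⟩ := hpar t
    apply hv
    simp only at hst
    omega
  have hmaps : ∀ t ∈ (univ : Finset ι), (v t - a) / 2 ∈ Icc 0 ((b - a) / 2) := by
    intro t _
    have := mem_Icc.mp (hab t)
    rw [mem_Icc]
    omega
  have := card_le_card_of_injOn _ hmaps hinj
  rw [card_univ, Int.card_Icc] at this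
  have := mem_Icc.mp (hab (Classical.arbitrary ι))
  omega

structure IsLift {m : ℕ} (g : ℕ → ZMod m) (n : ℕ) (h : ℕ → ℤ) : Prop where
  zero : h 0 = 0
  abs_sub_succ_le : ∀ k, |h (k + 1) - h k| ≤ 1
  cast_eq : ∀ k ≤ n, g k = g 0 + h k

lemma exists_isLift {m n : ℕ} {g : ℕ → ZMod m}
    (hg : ∀ k < n, g (k + 1) = g k + 1 ∨ g (k + 1) = g k - 1) : ∃ h, IsLift g n h := by
  let d : ℕ → ℤ := fun k => if g (k + 1) = g k + 1 then 1 else -1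
  refine ⟨fun k => ∑ j ∈ range k, d j, ⟨by simp, fun k => ?_, fun k hk => ?_⟩⟩
  · simp only [sum_range_succ, add_sub_cancel_left, d]
    split_ifs <;> simp
  · induction k with
    | zero => simp
    | succ k ih =>
      rw [sum_range_succ, Int.cast_add, ← add_assoc, ← ih (by omega)]
      by_cases hk' : g (k + 1) = g k + 1
      · simp [d, hk']
      · simp [d, (hg k (by omega)).resolve_left hk', sub_eq_add_neg]

namespace IsLift

variable {m n : ℕ} {g : ℕ → ZMod m} {h : ℕ → ℤ}

lemma abs_le (hL : IsLift g n h) (k : ℕ) : |h k| ≤ k := by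
  simpa [hL.zero] using abs_sub_le_of_abs_sub_succ_le hL.abs_sub_succ_le (Nat.zero_le k)

lemma dvd_of_closed (hL : IsLift g n h) (hclosed : g n = g 0) : (m : ℤ) ∣ h n := by
  rw [← ZMod.intCast_zmod_eq_zero_iff_dvd]
  have := hL.cast_eq n le_rfl
  rwa [hclosed, left_eq_add] at this

variable {ℓ : ℕ} {g : ℕ → ZMod (2 * ℓ)}

lemma four_mul_le_of_eq_zero (hL : IsLift g n h) (hn : h n = 0) (hℓ : 0 < ℓ)
    (hvis : ∀ t : Fin ℓ, ∃ k ≤ n, g k = ((2 * t + 1 : ℕ) : ZMod (2 * ℓ))) : 4 * ℓ ≤ n + 4 := by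
  choose K hKn hKg using hvis
  set v : Fin ℓ → ℤ := fun t => h (K t)
  have hcast : ∀ t, g 0 + v t = ((2 * t + 1 : ℕ) : ZMod (2 * ℓ)) := fun t =>
    (hL.cast_eq _ (hKn t)).symm.trans (hKg t)
  have hinj : Function.Injective v := by
    intro s t hst
    have := (hcast s).symm.trans (hst ▸ hcast t)
    rw [ZMod.natCast_eq_natCast_iff', Nat.mod_eq_of_lt (by omega),
      Nat.mod_eq_of_lt (by omega)] at this
    exact Fin.ext (by omega)
  have hpar : ∀ s t, Even (v s - v t) := by
    intro s t
    have : ((v s - v t : ℤ) : ZMod (2 * ℓ)) = ((2 * s - 2 * t : ℤ) : ZMod (2 * ℓ)) := by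
      have hs := hcast s
      have ht := hcast t
      push_cast at hs ht ⊢
      linear_combination hs - ht
    obtain ⟨q, hq⟩ := (ZMod.intCast_eq_intCast_iff_dvd_sub _ _ _).mp this
    exact ⟨s - t - ℓ * q, by push_cast at hq; linarith⟩
  have : Nonempty (Fin ℓ) := ⟨⟨0, hℓ⟩⟩
  obtain ⟨t₀, ht₀⟩ := Finite.exists_min v
  obtain ⟨t₁, ht₁⟩ := Finite.exists_max v
  have hspan := two_mul_card_le_of_even_sub hinj (fun t => mem_Icc.mpr ⟨ht₀ t, ht₁ t⟩)
    (fun t => hpar t t₀)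
  have hcover : 2 * (v t₁ - v t₀) ≤ n :=
    two_mul_sub_le_of_eq hL.abs_sub_succ_le (hn.trans hL.zero.symm) (hKn t₀) (hKn t₁)
  rw [Fintype.card_fin] at hspan
  omega

lemma winds_or_four_mul_le (hL : IsLift g n h) (hclosed : g n = g 0) (hℓ : 0 < ℓ)
    (hvis : ∀ t : Fin ℓ, ∃ k ≤ n, g k = ((2 * t + 1 : ℕ) : ZMod (2 * ℓ))) :
    2 * ℓ ≤ |h n| ∨ 4 * ℓ ≤ n + 4 := by
  by_cases hn : h n = 0
  · exact Or.inr (hL.four_mul_le_of_eq_zero hn hℓ hvis)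
  · left
    exact_mod_cast Int.le_of_dvd (abs_pos.mpr hn) ((dvd_abs _ _).mpr (hL.dvd_of_closed hclosed))

end IsLift

section Cycle

variable {ℓ n : ℕ} {g : ℕ → ZMod (2 * ℓ)}

theorem two_mul_le_of_closed (hℓ : 2 ≤ ℓ)
    (hg : ∀ k < n, g (k + 1) = g k + 1 ∨ g (k + 1) = g k - 1) (hclosed : g n = g 0)
    (hvis : ∀ t : Fin ℓ, ∃ k ≤ n, g k = ((2 * t + 1 : ℕ) : ZMod (2 * ℓ))) : 2 * ℓ ≤ n := by
  obtain ⟨h, hL⟩ := exists_isLift hg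
  have := hL.abs_le n
  rcases hL.winds_or_four_mul_le hclosed (by omega) hvis with hwind | hlong <;> omega

theorem exists_unit_of_closed (hℓ : 3 ≤ ℓ)
    (hg : ∀ k < n, g (k + 1) = g k + 1 ∨ g (k + 1) = g k - 1) (hclosed : g n = g 0)
    (hvis : ∀ t : Fin ℓ, ∃ k ≤ n, g k = ((2 * t + 1 : ℕ) : ZMod (2 * ℓ))) (hn : n = 2 * ℓ) :
    ∃ ε : (ZMod (2 * ℓ))ˣ, ∀ k ≤ n, g k = g 0 + ε * k := by
  obtain ⟨h, hL⟩ := exists_isLift hg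
  have hwind := (hL.winds_or_four_mul_le hclosed (by omega) hvis).resolve_right (by omega)
  have hrest : ∀ k ≤ n, |h n - h k| ≤ n - k := fun k hk =>
    abs_sub_le_of_abs_sub_succ_le hL.abs_sub_succ_le hk
  rcases le_abs'.mp hwind with hneg | hpos
  · refine ⟨-1, fun k hk => ?_⟩
    have := hL.abs_le k
    have := hrest k hk
    rw [abs_le] at *
    rw [hL.cast_eq k hk, show h k = -k by omega]
    push_cast
    ring
  · refine ⟨1, fun k hk => ?_⟩
    have := hL.abs_le k
    have := hrest k hk
    rw [abs_le] at *
    rw [hL.cast_eq k hk, show h k = k by omega]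
    push_cast
    ring

end Cycle

theorem SimpleGraph.Walk.existsUnique_mem_support_of_getVert_eq {V : Type*} {G : SimpleGraph V}
    {m : ℕ} [NeZero m] {a : V} (S : G.Walk a a) (hlen : S.length = m) (f : V → ZMod m)
    (ε : (ZMod m)ˣ) (hf : ∀ k < m, f (S.getVert k) = f a + ε * k) (r : ZMod m) :
    ∃! v, v ∈ S.support ∧ f v = r := by
  have hpos : ∀ v ∈ S.support, ∃ k < m, S.getVert k = v := by
    intro v hv
    obtain ⟨k, rfl, hk⟩ := mem_support_iff_exists_getVert.mp hv
    rcases hk.lt_or_eq with hk | rfl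
    · exact ⟨k, hlen ▸ hk, rfl⟩
    · exact ⟨0, NeZero.pos m, by rw [getVert_zero, getVert_length]⟩
  set k := ((r - f a) * ↑ε⁻¹).val
  have hk : f (S.getVert k) = r := by
    rw [hf k (ZMod.val_lt _), ZMod.natCast_zmod_val, mul_left_comm, Units.mul_inv, mul_one,
      add_sub_cancel]
  refine ⟨S.getVert k, ⟨S.getVert_mem_support k, hk⟩, ?_⟩
  rintro v ⟨hv, hvr⟩
  obtain ⟨j, hj, rfl⟩ := hpos v hv
  have hjk : (j : ZMod m) = (r - f a) * ↑ε⁻¹ := by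
    rw [← hvr, hf j hj, add_sub_cancel_left, mul_comm, Units.inv_mul_cancel_left]
  rw [← ZMod.val_cast_of_lt hj, hjk]

namespace selGadget

def proj (ℓ : ℕ) (v : ZMod ℓ × Fin 3) : ZMod (2 * ℓ) :=
  ((2 * v.1.val + if v.2 = 2 then 1 else 0 : ℕ) : ZMod (2 * ℓ))

variable {ℓ : ℕ}

lemma proj_port {i : ZMod ℓ} {c : Fin 3} (hc : c ≠ 2) :
    proj ℓ (i, c) = ((2 * i.val : ℕ) : ZMod (2 * ℓ)) := by
  simp [proj, hc]

lemma proj_terminal (i : ZMod ℓ) : proj ℓ (i, 2) = ((2 * i.val + 1 : ℕ) : ZMod (2 * ℓ)) := by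
  simp [proj]

lemma natCast_two_mul_val_add_one [NeZero ℓ] (i : ZMod ℓ) :
    ((2 * (i + 1).val : ℕ) : ZMod (2 * ℓ)) = ((2 * (i.val + 1) : ℕ) : ZMod (2 * ℓ)) := by
  have hsucc : i + 1 = ((i.val + 1 : ℕ) : ZMod ℓ) := by
    rw [Nat.cast_succ, ZMod.natCast_zmod_val]
  rw [hsucc, ZMod.val_natCast, ZMod.natCast_eq_natCast_iff', Nat.mul_mod_mul_left,
    Nat.mul_mod_mul_left, Nat.mod_mod]

lemma proj_adj_of_terminal [NeZero ℓ] {i j : ZMod ℓ} {c : Fin 3} (hc : c ≠ 2)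
    (hj : j = i ∨ j = i + 1) :
    proj ℓ (j, c) = proj ℓ (i, 2) + 1 ∨ proj ℓ (j, c) = proj ℓ (i, 2) - 1 := by
  rw [proj_port hc, proj_terminal]
  rcases hj with rfl | rfl
  · right
    push_cast
    ring
  · left
    rw [natCast_two_mul_val_add_one]
    push_cast
    ring

lemma proj_adj [NeZero ℓ] {x y : ZMod ℓ × Fin 3} (hxy : (selGadget ℓ).Adj x y) :
    proj ℓ y = proj ℓ x + 1 ∨ proj ℓ y = proj ℓ x - 1 := by
  obtain ⟨i, c⟩ := x
  obtain ⟨j, d⟩ := y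
  rcases hxy with ⟨hc, hd, hji⟩ | ⟨hd, hc, hij⟩
  · subst hc
    exact proj_adj_of_terminal hd hji
  · subst hd
    rcases proj_adj_of_terminal hc hij with h | h
    · right
      rw [h, add_sub_cancel_right]
    · left
      rw [h, sub_add_cancel]

lemma proj_eq_two_mul_val_iff [NeZero ℓ] {v : ZMod ℓ × Fin 3} {i : ZMod ℓ} :
    proj ℓ v = ((2 * i.val : ℕ) : ZMod (2 * ℓ)) ↔ v = (i, 0) ∨ v = (i, 1) := by
  constructor
  · obtain ⟨j, c⟩ := v
    intro hv
    have hj := ZMod.val_lt j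
    have hi := ZMod.val_lt i
    simp only [proj] at hv
    rw [ZMod.natCast_eq_natCast_iff', Nat.mod_eq_of_lt (by split_ifs <;> omega),
      Nat.mod_eq_of_lt (by omega)] at hv
    have hji : j = i := ZMod.val_injective ℓ (by split_ifs at hv <;> omega)
    subst hji
    fin_cases c <;> simp_all
  · rintro (rfl | rfl) <;> exact proj_port (by decide)

lemma exists_walk_around (m : ℕ) :
    ∃ S : (selGadget ℓ).Walk (((0 : ℕ) : ZMod ℓ), 2) ((m : ZMod ℓ), 2),
      S.length = 2 * m ∧ ∀ j ≤ m, ((j : ZMod ℓ), (2 : Fin 3)) ∈ S.support := by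
  induction m with
  | zero => exact ⟨.nil, rfl, fun j hj => by simp [Nat.le_zero.mp hj]⟩
  | succ m ih =>
    obtain ⟨S, hlen, hsupp⟩ := ih
    have h₁ : (selGadget ℓ).Adj ((m : ZMod ℓ), 2) (((m + 1 : ℕ) : ZMod ℓ), 0) :=
      Or.inl ⟨rfl, by simp, Or.inr (Nat.cast_succ m)⟩
    have h₂ : (selGadget ℓ).Adj (((m + 1 : ℕ) : ZMod ℓ), 0) (((m + 1 : ℕ) : ZMod ℓ), 2) :=
      Or.inr ⟨rfl, by simp, Or.inl rfl⟩
    refine ⟨(S.concat h₁).concat h₂, by simp [hlen]; ring, fun j hj => ?_⟩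
    rcases hj.lt_or_eq with hj | rfl
    · simp [Walk.support_concat, hsupp j (by omega)]
    · exact Walk.end_mem_support _

theorem exists_closed_walk [NeZero ℓ] :
    ∃ (a : ZMod ℓ × Fin 3) (S : (selGadget ℓ).Walk a a),
      (∀ x : ZMod ℓ × Fin 3, x.2 = 2 → x ∈ S.support) ∧ S.length = 2 * ℓ := by
  obtain ⟨S, hlen, hsupp⟩ := exists_walk_around (ℓ := ℓ) ℓ
  have hend : ((ℓ : ℕ) : ZMod ℓ) = ((0 : ℕ) : ZMod ℓ) := by simp
  refine ⟨_, S.copy rfl (by rw [hend]), fun x hx => ?_, by simpa using hlen⟩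
  rw [Walk.support_copy, ← Prod.mk.eta (p := x), hx, ← ZMod.natCast_zmod_val x.1]
  exact hsupp _ (ZMod.val_lt _).le

lemma exists_proj_getVert_eq {a : ZMod ℓ × Fin 3} (S : (selGadget ℓ).Walk a a)
    (hvis : ∀ x : ZMod ℓ × Fin 3, x.2 = 2 → x ∈ S.support) (t : Fin ℓ) :
    ∃ k ≤ S.length, proj ℓ (S.getVert k) = ((2 * t + 1 : ℕ) : ZMod (2 * ℓ)) := by
  obtain ⟨k, hk, hkn⟩ := Walk.mem_support_iff_exists_getVert.mp (hvis ((t : ℕ), 2) rfl)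
  exact ⟨k, hkn, by rw [hk, proj_terminal, ZMod.val_cast_of_lt t.isLt]⟩

variable [NeZero ℓ] {a : ZMod ℓ × Fin 3}

theorem two_mul_le_length (hℓ : 2 ≤ ℓ) (S : (selGadget ℓ).Walk a a)
    (hvis : ∀ x : ZMod ℓ × Fin 3, x.2 = 2 → x ∈ S.support) : 2 * ℓ ≤ S.length :=
  two_mul_le_of_closed hℓ (fun _ hk => proj_adj (S.adj_getVert_succ hk))
    (by rw [S.getVert_length, S.getVert_zero]) (exists_proj_getVert_eq S hvis)

theorem xor_mem_support (hℓ : 3 ≤ ℓ) (S : (selGadget ℓ).Walk a a)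
    (hvis : ∀ x : ZMod ℓ × Fin 3, x.2 = 2 → x ∈ S.support) (hlen : S.length = 2 * ℓ)
    (i : ZMod ℓ) : Xor ((i, 0) ∈ S.support) ((i, 1) ∈ S.support) := by
  obtain ⟨ε, hε⟩ := exists_unit_of_closed hℓ (fun _ hk => proj_adj (S.adj_getVert_succ hk))
    (by rw [S.getVert_length, S.getVert_zero]) (exists_proj_getVert_eq S hvis) hlen
  obtain ⟨v, ⟨hv, hpv⟩, huniq⟩ := S.existsUnique_mem_support_of_getVert_eq hlen (proj ℓ) ε
    (fun k hk => by rw [hε k (by omega), S.getVert_zero]) ((2 * i.val : ℕ) : ZMod (2 * ℓ))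
  have hfibre : ∀ c : Fin 3, c ≠ 2 → ((i, c) ∈ S.support ↔ (i, c) = v) :=
    fun c hc => ⟨fun h => huniq _ ⟨h, proj_port hc⟩, by rintro rfl; exact hv⟩
  rw [hfibre 0 (by decide), hfibre 1 (by decide)]
  rcases proj_eq_two_mul_val_iff.mp hpv with rfl | rfl <;> simp [xor_def]

end selGadget

/-- In the selection gadget of length `ℓ ≥ 3` with terminal set
`W = {xᵢ* : i}`: (i) every closed walk visiting all terminals has at least `2ℓ` edge
traversals; (ii) some closed walk visiting all terminals has exactly `2ℓ` edge traversals;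
(iii) every closed walk visiting all terminals with exactly `2ℓ` edge traversals visits, for
each `i`, exactly one of the two ports `xᵢ⁰` and `xᵢ¹`. -/
theorem stmt13 (ℓ : ℕ) (hℓ : 3 ≤ ℓ) :
    (∀ (a : ZMod ℓ × Fin 3) (S : (selGadget ℓ).Walk a a),
      (∀ x : ZMod ℓ × Fin 3, x.2 = 2 → x ∈ S.support) → 2 * ℓ ≤ S.length) ∧
    (∃ (a : ZMod ℓ × Fin 3) (S : (selGadget ℓ).Walk a a),
      (∀ x : ZMod ℓ × Fin 3, x.2 = 2 → x ∈ S.support) ∧ S.length = 2 * ℓ) ∧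
    (∀ (a : ZMod ℓ × Fin 3) (S : (selGadget ℓ).Walk a a),
      (∀ x : ZMod ℓ × Fin 3, x.2 = 2 → x ∈ S.support) → S.length = 2 * ℓ →
      ∀ i : ZMod ℓ, Xor' ((i, (0 : Fin 3)) ∈ S.support) ((i, (1 : Fin 3)) ∈ S.support)) := by
  have : NeZero ℓ := ⟨by omega⟩
  exact ⟨fun _ S hvis => selGadget.two_mul_le_length (by omega) S hvis,
    selGadget.exists_closed_walk,
    fun _ S hvis hlen => selGadget.xor_mem_support hℓ S hvis hlen⟩
end
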